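/- Let τ be an axiomatically consistent trace, and let m and m′ be distinct messages of the same handler whose get events satisfy get(m) eo get(m′). If e is a post event occurring in m and e′ is a post event occurring in m′ such that e and e′ post to the same handler h″, then e mo e′, and the get event of the message posted by e is eo-before the get event of the message posted by e′. In particular, two messages routed through identical sequences of handlers by nested posting retain their relative FIFO order at every handler along the sequence. -/
import Mathlib


/-!
Common framework for event-driven (ED) traces.

Handlers, shared variables and values are modelled as natural numbers;
events are (abstract) natural-number identifiers carrying a label.
-/

/-- Labels of events of event-driven programs: a read `⟨h,read,x⟩`, a write
`⟨h,write,x,v⟩`, a post `⟨h,post,h′⟩` or a get `⟨h,get⟩` of a handler `h`. -/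
inductive EventLabel : Type where
  | read  (h x : ℕ)
  | write (h x v : ℕ)
  | post  (h h' : ℕ)
  | get   (h : ℕ)
deriving DecidableEq

/-- The six basic relations of an ED trace. -/
inductive EDRel : Type where
  | po | rf | co | pb | mo | eo
deriving DecidableEq

/-- The handler of an event. -/
def EventLabel.hnd : EventLabel → ℕ
  | .read h _    => h
  | .write h _ _ => h
  | .post h _    => h
  | .get h       => h

def EventLabel.IsGet (l : EventLabel) : Prop := ∃ h, l = .get h
def EventLabel.IsPost (l : EventLabel) : Prop := ∃ h h', l = .post h h'
/-- `l` is a write event on variable `x`. -/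
def EventLabel.IsWriteTo (l : EventLabel) (x : ℕ) : Prop := ∃ h v, l = .write h x v
/-- `l` is a read event on variable `x`. -/
def EventLabel.IsReadOf (l : EventLabel) (x : ℕ) : Prop := ∃ h, l = .read h x
/-- `l` is a post event posting to handler `h'`. -/
def EventLabel.PostsTo (l : EventLabel) (h' : ℕ) : Prop := ∃ h, l = .post h h'

/-- An event-driven trace: a finite set `E` of events (natural-number
identifiers), a labelling of events, and a family of labelled edges. -/
structure EDTrace : Type where
  E : Finset ℕ
  lbl : ℕ → EventLabel
  rel : EDRel → ℕ → ℕ → Prop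

namespace EDTrace

/-- The from-read relation `fr = rf⁻¹ ; co`. -/
def fr (τ : EDTrace) (a b : ℕ) : Prop := ∃ w, τ.rel .rf w a ∧ τ.rel .co w b

/-- The queue order `qo = pb⁻¹ ; mo ; pb` on get events. -/
def qo (τ : EDTrace) (a b : ℕ) : Prop :=
  ∃ p q, τ.rel .pb p a ∧ τ.rel .pb q b ∧ τ.rel .mo p q

/-- `e` belongs to the (non-initial) message whose get event is `g`:
`g` is a get event and `e` is po-reachable from `g`. -/
def InMsg (τ : EDTrace) (g e : ℕ) : Prop :=
  (τ.lbl g).IsGet ∧ Relation.ReflTransGen (τ.rel .po) g e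

/-- `eo†`: every event of a message is related to every event of an
eo-later message of the same handler. -/
def eoDag (τ : EDTrace) (a b : ℕ) : Prop :=
  ∃ g g', τ.InMsg g a ∧ τ.InMsg g' b ∧ τ.rel .eo g g'

/-- One step of the happens-before relation:
`po ∪ rf ∪ fr ∪ co ∪ pb ∪ mo ∪ eo† ∪ qo`. -/
def step (τ : EDTrace) (a b : ℕ) : Prop :=
  τ.rel .po a b ∨ τ.rel .rf a b ∨ τ.fr a b ∨ τ.rel .co a b ∨
  τ.rel .pb a b ∨ τ.rel .mo a b ∨ τ.eoDag a b ∨ τ.qo a b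

/-- The happens-before relation: transitive closure of
`po ∪ rf ∪ fr ∪ co ∪ pb ∪ mo ∪ eo† ∪ qo`. -/
def hb (τ : EDTrace) : ℕ → ℕ → Prop := Relation.TransGen τ.step

/-- Axiomatic consistency: acyclicity of `po ∪ rf ∪ fr ∪ co ∪ pb ∪ mo ∪ eo† ∪ qo`. -/
def Consistent (τ : EDTrace) : Prop := ∀ e, ¬ τ.hb e e

/-- `e` belongs to the initial message of its handler: it belongs to no
message started by a get event. -/
def InInit (τ : EDTrace) (e : ℕ) : Prop :=
  e ∈ τ.E ∧ ¬ ∃ g ∈ τ.E, τ.InMsg g e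

/-- Two events belong to the same message (either the message of a common
get event, or both to the initial message of the same handler). -/
def SameMsg (τ : EDTrace) (a b : ℕ) : Prop :=
  (∃ g ∈ τ.E, τ.InMsg g a ∧ τ.InMsg g b) ∨
  (τ.InInit a ∧ τ.InInit b ∧ (τ.lbl a).hnd = (τ.lbl b).hnd)

/-- Well-formedness of the `po, rf, co, pb` components of a trace. -/
structure WFCore (τ : EDTrace) : Prop where
  edges_mem : ∀ r a b, τ.rel r a b → a ∈ τ.E ∧ b ∈ τ.E
  po_trans : Transitive (τ.rel .po)
  po_irrefl : ∀ a, ¬ τ.rel .po a a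
  po_same_handler : ∀ a b, τ.rel .po a b → (τ.lbl a).hnd = (τ.lbl b).hnd
  po_msg : ∀ a b, τ.rel .po a b → τ.SameMsg a b
  po_total : ∀ a ∈ τ.E, ∀ b ∈ τ.E, τ.SameMsg a b → a ≠ b →
    τ.rel .po a b ∨ τ.rel .po b a
  rf_lbl : ∀ a b, τ.rel .rf a b → ∃ x, (τ.lbl a).IsWriteTo x ∧ (τ.lbl b).IsReadOf x
  rf_unique : ∀ b ∈ τ.E, (∃ x, (τ.lbl b).IsReadOf x) → ∃! a, τ.rel .rf a b
  co_lbl : ∀ a b, τ.rel .co a b → ∃ x, (τ.lbl a).IsWriteTo x ∧ (τ.lbl b).IsWriteTo x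
  co_trans : Transitive (τ.rel .co)
  co_irrefl : ∀ a, ¬ τ.rel .co a a
  co_total : ∀ x, ∀ a ∈ τ.E, ∀ b ∈ τ.E, (τ.lbl a).IsWriteTo x → (τ.lbl b).IsWriteTo x →
    a ≠ b → τ.rel .co a b ∨ τ.rel .co b a
  pb_lbl : ∀ a b, τ.rel .pb a b → ∃ h h', τ.lbl a = .post h h' ∧ τ.lbl b = .get h'
  pb_get : ∀ b ∈ τ.E, (τ.lbl b).IsGet → ∃! a, τ.rel .pb a b
  pb_post : ∀ a ∈ τ.E, (τ.lbl a).IsPost → ∃! b, τ.rel .pb a b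

/-- Well-formedness of a (total) ED trace: additionally `mo` totally orders
the posts to each handler and `eo` totally orders the gets of each handler. -/
structure WF (τ : EDTrace) extends WFCore τ : Prop where
  mo_lbl : ∀ a b, τ.rel .mo a b → ∃ h', (τ.lbl a).PostsTo h' ∧ (τ.lbl b).PostsTo h'
  mo_trans : Transitive (τ.rel .mo)
  mo_irrefl : ∀ a, ¬ τ.rel .mo a a
  mo_total : ∀ h', ∀ a ∈ τ.E, ∀ b ∈ τ.E, (τ.lbl a).PostsTo h' → (τ.lbl b).PostsTo h' →
    a ≠ b → τ.rel .mo a b ∨ τ.rel .mo b a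
  eo_lbl : ∀ a b, τ.rel .eo a b → ∃ h, τ.lbl a = .get h ∧ τ.lbl b = .get h
  eo_trans : Transitive (τ.rel .eo)
  eo_irrefl : ∀ a, ¬ τ.rel .eo a a
  eo_total : ∀ h, ∀ a ∈ τ.E, ∀ b ∈ τ.E, τ.lbl a = .get h → τ.lbl b = .get h →
    a ≠ b → τ.rel .eo a b ∨ τ.rel .eo b a

/-- A partial trace: the `eo` and `mo` components are omitted (empty). -/
def IsPartial (τ : EDTrace) : Prop :=
  (∀ a b, ¬ τ.rel .eo a b) ∧ (∀ a b, ¬ τ.rel .mo a b)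

/-- `τ'` extends the (partial) trace `τ`: same events, labels and
`po, rf, co, pb` edges; only `eo` and `mo` may be added. -/
def Extends (τ' τ : EDTrace) : Prop :=
  τ'.E = τ.E ∧ τ'.lbl = τ.lbl ∧ τ'.rel .po = τ.rel .po ∧ τ'.rel .rf = τ.rel .rf ∧
  τ'.rel .co = τ.rel .co ∧ τ'.rel .pb = τ.rel .pb

/-- ED-consistency of a partial trace: it can be extended, by adding `eo`
edges (total per handler) and `mo` edges (total per target handler), to a
well-formed axiomatically consistent trace. -/
def EDConsistent (τ : EDTrace) : Prop :=
  ∃ τ' : EDTrace, Extends τ' τ ∧ τ'.WF ∧ τ'.Consistent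

end EDTrace

lemma inMsg_mem (τ : EDTrace) (hwf : τ.WF) {g e : ℕ} (hg : g ∈ τ.E)
    (h : τ.InMsg g e) : e ∈ τ.E := by
  obtain ⟨-, hpath⟩ := h
  induction hpath with
  | refl => exact hg
  | tail _ hstep ih => exact (hwf.edges_mem _ _ _ hstep).2

/-- Let `τ` be a well-formed axiomatically consistent trace,
and let `m, m'` be distinct messages of the same handler, with get events
`g ≠ g'` satisfying `g eo g'`. If `e` is a post event in `m` and `e'` a post
event in `m'` posting to the same handler `h''`, then `e mo e'`, and the get
event of the message posted by `e` is eo-before the get event of the message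
posted by `e'` (so messages routed through identical sequences of handlers by
nested posting retain their relative FIFO order at every handler along the
sequence). -/
theorem statement9 (τ : EDTrace) (hwf : τ.WF) (hcons : τ.Consistent)
    (g g' : ℕ) (hg : g ∈ τ.E) (hg' : g' ∈ τ.E) (hne : g ≠ g')
    (hsame : (τ.lbl g).hnd = (τ.lbl g').hnd)
    (hget : (τ.lbl g).IsGet) (hget' : (τ.lbl g').IsGet)
    (heo : τ.rel .eo g g')
    (e e' : ℕ) (he : τ.InMsg g e) (he' : τ.InMsg g' e')
    (h'' : ℕ) (hpost : (τ.lbl e).PostsTo h'') (hpost' : (τ.lbl e').PostsTo h'') :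
    τ.rel .mo e e' ∧
    ∀ gg gg', τ.rel .pb e gg → τ.rel .pb e' gg' → τ.rel .eo gg gg' := by
  have heE : e ∈ τ.E := inMsg_mem τ hwf hg he
  have heE' : e' ∈ τ.E := inMsg_mem τ hwf hg' he'
  have heodag : τ.eoDag e e' := ⟨g, g', he, he', heo⟩
  have hnee : e ≠ e' := by
    rintro rfl
    exact hcons e (Relation.TransGen.single (Or.inr (Or.inr (Or.inr (Or.inr
      (Or.inr (Or.inr (Or.inl heodag))))))))
  have hmo : τ.rel .mo e e' := by
    rcases hwf.mo_total h'' e heE e' heE' hpost hpost' hnee with h | h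
    · exact h
    · exfalso
      refine hcons e (Relation.TransGen.head (b := e') ?_ (Relation.TransGen.single ?_))
      · exact Or.inr (Or.inr (Or.inr (Or.inr (Or.inr (Or.inr (Or.inl heodag))))))
      · exact Or.inr (Or.inr (Or.inr (Or.inr (Or.inr (Or.inl h)))))
  refine ⟨hmo, ?_⟩
  intro gg gg' hpb hpb'
  obtain ⟨h1, h1', hl1, hl1'⟩ := hwf.pb_lbl e gg hpb
  obtain ⟨h2, h2', hl2, hl2'⟩ := hwf.pb_lbl e' gg' hpb'
  obtain ⟨hA, hlA⟩ := hpost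
  obtain ⟨hB, hlB⟩ := hpost'
  have e1 : h1' = h'' := by rw [hlA] at hl1; cases hl1; rfl
  have e2 : h2' = h'' := by rw [hlB] at hl2; cases hl2; rfl
  rw [e1] at hl1'
  rw [e2] at hl2'
  have hggE : gg ∈ τ.E := (hwf.edges_mem _ _ _ hpb).2
  have hggE' : gg' ∈ τ.E := (hwf.edges_mem _ _ _ hpb').2
  have hneg : gg ≠ gg' := by
    rintro rfl
    obtain ⟨a, -, hu⟩ := hwf.pb_get gg hggE ⟨h'', hl1'⟩
    exact hnee ((hu e hpb).trans (hu e' hpb').symm)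
  rcases hwf.eo_total h'' gg hggE gg' hggE' hl1' hl2' hneg with h | h
  · exact h
  · exfalso
    have hqo : τ.qo gg gg' := ⟨e, e', hpb, hpb', hmo⟩
    have hdag : τ.eoDag gg' gg :=
      ⟨gg', gg, ⟨⟨h'', hl2'⟩, Relation.ReflTransGen.refl⟩,
        ⟨⟨h'', hl1'⟩, Relation.ReflTransGen.refl⟩, h⟩
    refine hcons gg (Relation.TransGen.head (b := gg') ?_ (Relation.TransGen.single ?_))
    · exact Or.inr (Or.inr (Or.inr (Or.inr (Or.inr (Or.inr (Or.inr hqo))))))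
    · exact Or.inr (Or.inr (Or.inr (Or.inr (Or.inr (Or.inr (Or.inl hdag))))))
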